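/- arXiv:2007.08483 — 5 statements merged into one kernel-verified Lean document; each statement's English description precedes it below -/
import Mathlib

section
/- Let p_1, p_2, ... be independent identically distributed random variables with values in the interval [ε₀, 1] for some ε₀ > 0, with mean μ = E[p_1] and variance σ² = Var(p_1), and let p̄_n = (1/n)·∑_{i=1}^n p_i. Then the model-average negative log-likelihood NLL_n = E[−log p̄_n] satisfies NLL_n = −log μ + (σ²/(2μ²))·(1/n) + O(1/n²); that is, there exists a constant C > 0 such that for every positive integer n, |E[−log p̄_n] + log μ − σ²/(2μ²·n)| ≤ C/n². -/
/-!
Write `p̄ₙ = μ + Ȳₙ`, where `Ȳₙ = Sₙ / n` is the sample mean of the centred variables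
`Yᵢ = pᵢ - μ`. On `[ε₀, ∞)` the cubic Taylor polynomial of `log` at `μ` approximates `log` up to
`Ȳₙ⁴ / ε₀⁴`, so `E[log p̄ₙ]` is determined, up to `E[Ȳₙ⁴] / ε₀⁴`, by the first three moments
of `Ȳₙ`. By independence `E[Sₙ₊₁ᵏ] = ∑ⱼ (k choose j) E[Sₙʲ] E[Yₙᵏ⁻ʲ]`, which gives the moments
`0`, `n σ²`, `n m₃` and `n m₄ + 3n(n-1)σ⁴` of `Sₙ`. Hence the linear term vanishes, the
quadratic one is `σ² / (2μ²n)`, and the cubic term and the remainder are `O(1/n²)`.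
-/

open MeasureTheory ProbabilityTheory Finset Real

lemma abs_log_one_add_sub_taylor_le {ε t : ℝ} (hε : 0 < ε) (hε1 : ε ≤ 1) (ht : ε ≤ 1 + t) :
    |log (1 + t) - (t - t ^ 2 / 2 + t ^ 3 / 3)| ≤ t ^ 4 / ε := by
  have hsegment (s : ℝ) (hs : s ∈ Set.uIcc 0 t) : |s| ≤ |t| ∧ ε ≤ 1 + s := by
    have habs := Set.abs_sub_left_of_mem_uIcc hs
    simp only [sub_zero] at habs
    refine ⟨habs, ?_⟩
    rcases Set.mem_uIcc.1 hs with h | h <;> linarith [h.1]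
  have hderiv (s : ℝ) (hs : s ∈ Set.uIcc 0 t) : HasDerivWithinAt
      (fun s => log (1 + s) - (s - s ^ 2 / 2 + s ^ 3 / 3)) (-s ^ 3 / (1 + s)) (Set.uIcc 0 t) s := by
    have h1s : 1 + s ≠ 0 := by linarith [(hsegment s hs).2]
    have := (((hasDerivAt_id s).const_add 1).log h1s).sub
      (((hasDerivAt_id s).sub ((hasDerivAt_pow 2 s).div_const 2)).add
        ((hasDerivAt_pow 3 s).div_const 3))
    refine (this.congr_deriv ?_).hasDerivWithinAt
    simp only [id]
    field_simp
    ring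
  have hbound (s : ℝ) (hs : s ∈ Set.uIcc 0 t) : ‖-s ^ 3 / (1 + s)‖ ≤ |t| ^ 3 / ε := by
    obtain ⟨hst, hεs⟩ := hsegment s hs
    rw [norm_div, norm_neg, norm_pow, Real.norm_eq_abs, Real.norm_eq_abs,
      abs_of_pos (hε.trans_le hεs)]
    gcongr
  have := Convex.norm_image_sub_le_of_norm_hasDerivWithin_le hderiv hbound (convex_uIcc 0 t)
    Set.left_mem_uIcc Set.right_mem_uIcc
  simp only [Real.norm_eq_abs, sub_zero] at this
  calc _ ≤ |t| ^ 3 / ε * |t| := by simpa using this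
    _ = t ^ 4 / ε := by rw [div_mul_eq_mul_div, ← pow_succ, Even.pow_abs ⟨2, rfl⟩]

/-- The cubic Taylor polynomial of `log` at `m`, evaluated at `m + y`. -/
noncomputable def cubicTaylorLog (m y : ℝ) : ℝ :=
  log m + y / m - y ^ 2 / (2 * m ^ 2) + y ^ 3 / (3 * m ^ 3)

lemma abs_log_add_sub_cubicTaylorLog_le {ε m y : ℝ} (hε : 0 < ε) (hm : ε ≤ m)
    (hy : ε ≤ m + y) : |log (m + y) - cubicTaylorLog m y| ≤ y ^ 4 / ε ^ 4 := by
  have hm0 : 0 < m := hε.trans_le hm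
  have hone_add : 1 + y / m = (m + y) / m := by field_simp
  have key := abs_log_one_add_sub_taylor_le (ε := ε / m) (t := y / m) (by positivity)
    ((div_le_one hm0).2 hm) (by rw [hone_add]; gcongr)
  rw [hone_add, log_div (by linarith) hm0.ne'] at key
  calc _ = |log (m + y) - log m - (y / m - (y / m) ^ 2 / 2 + (y / m) ^ 3 / 3)| := by
        rw [cubicTaylorLog]; congr 1; field_simp; ring
    _ ≤ (y / m) ^ 4 / (ε / m) := key
    _ = y ^ 4 / (m ^ 3 * ε) := by field_simp
    _ ≤ y ^ 4 / ε ^ 4 := by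
        rw [pow_succ ε 3]
        gcongr

lemma Pi.add_pow_eq_sum {Ω R : Type*} [CommSemiring R] (X Y : Ω → R) (k : ℕ) :
    (X + Y) ^ k = fun ω => ∑ j ∈ range (k + 1), X ω ^ j * Y ω ^ (k - j) * k.choose j := by
  ext ω
  simp only [Pi.pow_apply, Pi.add_apply, add_pow]

namespace ProbabilityTheory

variable {Ω : Type*} [MeasurableSpace Ω] {P : Measure Ω}

lemma IndepFun.integrable_pow_add {X Y : Ω → ℝ} (hXY : IndepFun X Y P)
    (hX : ∀ j, Integrable (X ^ j) P) (hY : ∀ j, Integrable (Y ^ j) P) (k : ℕ) :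
    Integrable ((X + Y) ^ k) P := by
  rw [Pi.add_pow_eq_sum]
  exact integrable_finsetSum _ fun j _ =>
    ((hXY.comp (measurable_id.pow_const j) (measurable_id.pow_const (k - j))).integrable_mul
      (hX j) (hY (k - j))).mul_const _

lemma IndepFun.moment_add {X Y : Ω → ℝ} (hXY : IndepFun X Y P)
    (hX : ∀ j, Integrable (X ^ j) P) (hY : ∀ j, Integrable (Y ^ j) P) (k : ℕ) :
    moment (X + Y) k P =
      ∑ j ∈ range (k + 1), moment X j P * moment Y (k - j) P * k.choose j := by
  have hindep (j : ℕ) : IndepFun (X ^ j) (Y ^ (k - j)) P :=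
    hXY.comp (measurable_id.pow_const j) (measurable_id.pow_const (k - j))
  rw [moment_def, Pi.add_pow_eq_sum, integral_finsetSum]
  · refine sum_congr rfl fun j _ => ?_
    rw [integral_mul_const]
    exact congrArg (· * _) ((hindep j).integral_mul_eq_mul_integral
      (hX j).aestronglyMeasurable (hY _).aestronglyMeasurable)
  · exact fun j _ => ((hindep j).integrable_mul (hX j) (hY _)).mul_const _

lemma IdentDistrib.moment_eq {Ω' : Type*} [MeasurableSpace Ω'] {P' : Measure Ω'} {X : Ω → ℝ}
    {X' : Ω' → ℝ} (h : IdentDistrib X X' P P') (k : ℕ) : moment X k P = moment X' k P' :=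
  h.pow.integral_eq

lemma moment_div_const (X : Ω → ℝ) (c : ℝ) (k : ℕ) :
    moment (fun ω => X ω / c) k P = moment X k P / c ^ k := by
  simp only [moment_def, Pi.pow_apply, div_pow, integral_div]

lemma integrable_pow_of_abs_le [IsFiniteMeasure P] {X : Ω → ℝ} {C : ℝ}
    (hX : AEStronglyMeasurable X P) (hbdd : ∀ ω, |X ω| ≤ C) (k : ℕ) :
    Integrable (X ^ k) P :=
  Integrable.of_bound (hX.pow k) (C ^ k) (ae_of_all _ fun ω => by
    simpa only [Pi.pow_apply, norm_pow, Real.norm_eq_abs] using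
      pow_le_pow_left₀ (abs_nonneg _) (hbdd ω) k)

section Probability

variable [IsProbabilityMeasure P]

@[simp]
lemma moment_zero_right (X : Ω → ℝ) : moment X 0 P = 1 := by
  simp [moment]

lemma abs_moment_le {X : Ω → ℝ} {C : ℝ} (hbdd : ∀ ω, |X ω| ≤ C)
    (k : ℕ) : |moment X k P| ≤ C ^ k := by
  simpa [moment_def] using norm_integral_le_of_norm_le_const (μ := P) (f := X ^ k) (C := C ^ k)
    (ae_of_all _ fun ω => by
      simpa only [Pi.pow_apply, norm_pow, Real.norm_eq_abs] using
        pow_le_pow_left₀ (abs_nonneg _) (hbdd ω) k)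

lemma integrable_cubicTaylorLog {m : ℝ} {Y : Ω → ℝ} (hint : ∀ k, Integrable (Y ^ k) P) :
    Integrable (fun ω => cubicTaylorLog m (Y ω)) P :=
  (((integrable_const _).fun_add (by simpa using (hint 1).div_const m)).sub'
    ((hint 2).div_const _)).fun_add ((hint 3).div_const _)

lemma integral_cubicTaylorLog {m : ℝ} {Y : Ω → ℝ} (hint : ∀ k, Integrable (Y ^ k) P) :
    ∫ ω, cubicTaylorLog m (Y ω) ∂P =
      log m + moment Y 1 P / m - moment Y 2 P / (2 * m ^ 2) + moment Y 3 P / (3 * m ^ 3) := by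
  have hpow (k : ℕ) (c : ℝ) : Integrable (fun ω => Y ω ^ k / c) P := (hint k).div_const c
  have hlin : Integrable (fun ω => log m + Y ω / m) P :=
    (integrable_const _).fun_add (by simpa using hpow 1 m)
  simp only [cubicTaylorLog]
  rw [integral_add (hlin.sub' (hpow 2 _)) (hpow 3 _), integral_sub hlin (hpow 2 _),
    integral_add (integrable_const _) (by simpa using hpow 1 m), integral_div, integral_div,
    integral_div]
  simp [moment_def]

lemma abs_integral_log_add_sub_cubicTaylorLog_le {ε m : ℝ} {Y : Ω → ℝ} (hε : 0 < ε)
    (hm : ε ≤ m) (hY : ∀ ω, ε ≤ m + Y ω) (hint : ∀ k, Integrable (Y ^ k) P) :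
    |∫ ω, log (m + Y ω) ∂P -
        (log m + moment Y 1 P / m - moment Y 2 P / (2 * m ^ 2) + moment Y 3 P / (3 * m ^ 3))| ≤
      moment Y 4 P / ε ^ 4 := by
  have hT := integrable_cubicTaylorLog (m := m) hint
  have hR : Integrable (fun ω => log (m + Y ω) - cubicTaylorLog m (Y ω)) P := by
    refine ((hint 4).div_const (ε ^ 4)).mono' ?_ (ae_of_all _ fun ω => ?_)
    · have hY : AEMeasurable Y P := (by simpa using hint 1 : Integrable Y P).aemeasurable
      exact (measurable_log.comp_aemeasurable (hY.const_add m)).aestronglyMeasurable.sub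
        hT.aestronglyMeasurable
    · exact abs_log_add_sub_cubicTaylorLog_le hε hm (hY ω)
  have hlog : Integrable (fun ω => log (m + Y ω)) P :=
    (hR.add hT).congr (ae_of_all _ fun ω => sub_add_cancel _ _)
  rw [← integral_cubicTaylorLog hint, ← integral_sub hlog hT, ← Real.norm_eq_abs, moment_def,
    ← integral_div]
  exact norm_integral_le_of_norm_le ((hint 4).div_const _)
    (ae_of_all _ fun ω => abs_log_add_sub_cubicTaylorLog_le hε hm (hY ω))

section IID

variable {Y : ℕ → Ω → ℝ} (hmeas : ∀ i, Measurable (Y i))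
  (hind : iIndepFun Y P) (hident : ∀ i, IdentDistrib (Y i) (Y 0) P P)
  (hint : ∀ j, Integrable (Y 0 ^ j) P)
include hmeas hind hident hint

lemma integrable_pow_sum_range (n j : ℕ) : Integrable ((∑ i ∈ range n, Y i) ^ j) P := by
  induction n generalizing j with
  | zero => exact integrable_const ((0 : ℝ) ^ j)
  | succ n ih =>
    rw [sum_range_succ]
    exact (hind.indepFun_sum_range_succ hmeas n).integrable_pow_add ih
      (fun j => (hident n).pow.integrable_iff.2 (hint j)) j

lemma moment_sum_range_succ (n k : ℕ) :
    moment (∑ i ∈ range (n + 1), Y i) k P = ∑ j ∈ range (k + 1),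
      moment (∑ i ∈ range n, Y i) j P * moment (Y 0) (k - j) P * k.choose j := by
  rw [sum_range_succ, (hind.indepFun_sum_range_succ hmeas n).moment_add
    (integrable_pow_sum_range hmeas hind hident hint n)
    (fun j => (hident n).pow.integrable_iff.2 (hint j))]
  simp only [(hident n).moment_eq]

variable (hmean : moment (Y 0) 1 P = 0)
include hmean

lemma moment_sum_range_one (n : ℕ) : moment (∑ i ∈ range n, Y i) 1 P = 0 := by
  induction n with
  | zero => simp
  | succ n ih =>
    rw [moment_sum_range_succ hmeas hind hident hint]
    simp [sum_range_succ, ih, hmean]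

lemma moment_sum_range_two (n : ℕ) :
    moment (∑ i ∈ range n, Y i) 2 P = n * moment (Y 0) 2 P := by
  induction n with
  | zero => simp
  | succ n ih =>
    rw [moment_sum_range_succ hmeas hind hident hint]
    simp [sum_range_succ, ih, hmean, moment_sum_range_one hmeas hind hident hint hmean]
    ring

lemma moment_sum_range_three (n : ℕ) :
    moment (∑ i ∈ range n, Y i) 3 P = n * moment (Y 0) 3 P := by
  induction n with
  | zero => simp
  | succ n ih =>
    rw [moment_sum_range_succ hmeas hind hident hint]
    simp [sum_range_succ, ih, hmean, moment_sum_range_one hmeas hind hident hint hmean]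
    ring

lemma moment_sum_range_four (n : ℕ) :
    moment (∑ i ∈ range n, Y i) 4 P =
      n * moment (Y 0) 4 P + 3 * n * (n - 1) * moment (Y 0) 2 P ^ 2 := by
  induction n with
  | zero => simp
  | succ n ih =>
    rw [moment_sum_range_succ hmeas hind hident hint]
    simp [sum_range_succ, ih, hmean, Nat.choose, moment_sum_range_one hmeas hind hident hint hmean,
      moment_sum_range_two hmeas hind hident hint hmean]
    ring

lemma moment_sum_range_four_le (hbdd : ∀ ω, |Y 0 ω| ≤ 1) (n : ℕ) :
    moment (∑ i ∈ range n, Y i) 4 P ≤ 3 * n ^ 2 := by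
  have hm2 : moment (Y 0) 2 P ^ 2 ≤ 1 :=
    (sq_le_one_iff_abs_le_one _).2 (by simpa using abs_moment_le (P := P) hbdd 2)
  have hm4 : moment (Y 0) 4 P ≤ 1 := (le_abs_self _).trans (by simpa using abs_moment_le hbdd 4)
  have hn : (0 : ℝ) ≤ 3 * n * (n - 1) := by
    rcases n with _ | n
    · simp
    · rw [Nat.cast_succ, add_sub_cancel_right]; positivity
  rw [moment_sum_range_four hmeas hind hident hint hmean]
  nlinarith [mul_le_mul_of_nonneg_left hm4 n.cast_nonneg, mul_le_mul_of_nonneg_left hm2 hn]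

end IID

lemma abs_integral_log_add_sum_div_sub_le {Y : ℕ → Ω → ℝ} (hmeas : ∀ i, Measurable (Y i))
    (hind : iIndepFun Y P) (hident : ∀ i, IdentDistrib (Y i) (Y 0) P P)
    (hmean : moment (Y 0) 1 P = 0) (hbdd : ∀ ω, |Y 0 ω| ≤ 1) {ε m : ℝ} (hε : 0 < ε)
    (hm : ε ≤ m) {n : ℕ} (hn : 0 < n) (hY : ∀ ω, ε ≤ m + (∑ i ∈ range n, Y i ω) / n) :
    |∫ ω, log (m + (∑ i ∈ range n, Y i ω) / n) ∂P - log m + moment (Y 0) 2 P / (2 * m ^ 2 * n)|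
      ≤ (3 / ε ^ 4 + 1 / (3 * ε ^ 3)) / n ^ 2 := by
  have hint (j : ℕ) : Integrable (Y 0 ^ j) P :=
    integrable_pow_of_abs_le (hmeas 0).aestronglyMeasurable hbdd j
  simp only [← Finset.sum_apply] at hY ⊢
  have hint_mean (k : ℕ) : Integrable ((fun ω => (∑ i ∈ range n, Y i) ω / n) ^ k) P :=
    ((integrable_pow_sum_range hmeas hind hident hint n k).div_const ((n : ℝ) ^ k)).congr
      (ae_of_all _ fun ω => by simp [div_pow])
  have key := abs_integral_log_add_sub_cubicTaylorLog_le hε hm hY hint_mean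
  simp only [moment_div_const, moment_sum_range_one hmeas hind hident hint hmean,
    moment_sum_range_two hmeas hind hident hint hmean,
    moment_sum_range_three hmeas hind hident hint hmean] at key
  have hfourth : moment (∑ i ∈ range n, Y i) 4 P / n ^ 4 / ε ^ 4 ≤ 3 / ε ^ 4 / n ^ 2 :=
    calc _ ≤ 3 * (n : ℝ) ^ 2 / n ^ 4 / ε ^ 4 := by
          gcongr
          exact moment_sum_range_four_le hmeas hind hident hint hmean hbdd n
      _ = 3 / ε ^ 4 / n ^ 2 := by field_simp
  set m3 := moment (Y 0) 3 P
  have hthird : |m3 / n ^ 2 / (3 * m ^ 3)| ≤ 1 / (3 * ε ^ 3) / n ^ 2 := by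
    have hm3 : |m3| ≤ 1 := by simpa using abs_moment_le (P := P) hbdd 3
    have hm0 : 0 < m := hε.trans_le hm
    rw [abs_div, abs_div, abs_of_pos (by positivity : (0 : ℝ) < n ^ 2),
      abs_of_pos (by positivity : 0 < 3 * m ^ 3), div_right_comm]
    gcongr
  have hsplit := (abs_add_le _ _).trans (add_le_add (key.trans hfourth) hthird)
  rw [add_div]
  refine (le_of_eq ?_).trans hsplit
  congr 1
  field_simp
  ring

end Probability

end ProbabilityTheory

/-- **Proposition 1.** For i.i.d. random variables `p i` with values in `[ε₀, 1]`, `ε₀ > 0`,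
with mean `μ` and variance `σ²`, the model-average NLL of the ensemble of size `n`,
`NLL_n = E[-log p̄_n]`, satisfies `NLL_n = -log μ + (σ²/(2μ²))·(1/n) + O(1/n²)`. -/
theorem nll_ensemble_power_law
    {Ω : Type*} [MeasurableSpace Ω] (P : Measure Ω) [IsProbabilityMeasure P]
    (ε₀ : ℝ) (hε₀ : 0 < ε₀)
    (p : ℕ → Ω → ℝ) (hmeas : ∀ i, Measurable (p i))
    (hrange : ∀ i ω, p i ω ∈ Set.Icc ε₀ 1)
    (hindep : iIndepFun p P)
    (hident : ∀ i, IdentDistrib (p i) (p 0) P P)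
    (μ σ2 : ℝ) (hμ : μ = ∫ ω, p 0 ω ∂P) (hσ2 : σ2 = variance (p 0) P) :
    ∃ C > 0, ∀ n : ℕ, 0 < n →
      |(∫ ω, -Real.log ((∑ i ∈ Finset.range n, p i ω) / n) ∂P)
          + Real.log μ - σ2 / (2 * μ ^ 2 * n)| ≤ C / (n : ℝ) ^ 2 := by
  have hp_int (i : ℕ) : Integrable (p i) P :=
    Integrable.of_bound (hmeas i).aestronglyMeasurable 1 (ae_of_all _ fun ω => by
      rw [Real.norm_eq_abs, abs_le]
      constructor <;> linarith [(hrange i ω).1, (hrange i ω).2])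
  have hμ_mem : μ ∈ Set.Icc ε₀ 1 :=
    hμ ▸ (convex_Icc ε₀ 1).integral_mem isClosed_Icc (ae_of_all _ (hrange 0)) (hp_int 0)
  set Y : ℕ → Ω → ℝ := fun i ω => p i ω - μ
  have hmean : moment (Y 0) 1 P = 0 := by
    simp [Y, moment_def, integral_sub (hp_int 0) (integrable_const μ), ← hμ]
  have hvar : σ2 = moment (Y 0) 2 P := by
    rw [hσ2, variance_eq_integral (hmeas 0).aemeasurable, ← hμ]
    rfl
  have hY_bdd (ω : Ω) : |Y 0 ω| ≤ 1 := by
    rw [abs_le]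
    constructor <;> linarith [(hrange 0 ω).1, (hrange 0 ω).2, hμ_mem.1, hμ_mem.2]
  refine ⟨3 / ε₀ ^ 4 + 1 / (3 * ε₀ ^ 3), by positivity, fun n hn => ?_⟩
  have hn' : (0 : ℝ) < n := Nat.cast_pos.2 hn
  have hsample (ω : Ω) : (∑ i ∈ Finset.range n, p i ω) / n = μ + (∑ i ∈ range n, Y i ω) / n := by
    simp only [Y, sum_sub_distrib, sum_const, card_range, nsmul_eq_mul]
    field_simp
    ring
  have hsample_ge (ω : Ω) : ε₀ ≤ μ + (∑ i ∈ range n, Y i ω) / n := by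
    rw [← hsample, le_div_iff₀ hn']
    simpa [mul_comm] using card_nsmul_le_sum (range n) (p · ω) ε₀ fun i _ => (hrange i ω).1
  have key := abs_integral_log_add_sum_div_sub_le (fun i => (hmeas i).sub_const μ)
    (hindep.comp _ fun _ => measurable_id.sub_const μ)
    (fun i => (hident i).comp (measurable_id.sub_const μ)) hmean hY_bdd hε₀ hμ_mem.1 hn hsample_ge
  simp only [hsample, integral_neg, hvar]
  rw [← abs_neg]
  convert key using 2
  ring
end

section
/- Let p_1, p_2, ... be independent identically distributed random variables with values in the interval [ε₀, 1] for some ε₀ > 0, with mean μ = E[p_1], and let p̄_n = (1/n)·∑_{i=1}^n p_i. Fix an integer m ≥ 1, a real number 0 < δ < 1, and define R_m(μ − x) = −log(x/μ) − ∑_{k=1}^m (μ − x)^k/(k·μ^k) for x ∈ [ε₀, 1]. Then there exist constants C₁, C₂ > 0 and a positive integer N such that for all n ≥ N, |E[R_m(μ − p̄_n)]| ≤ C₁·exp(−2·n^δ) + C₂·n^{−(m+1)(1−δ)/2}. -/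
/-!
Split the expectation on the event `|p̄_n - μ| ≥ ε_n` with `ε_n = n^(-(1-δ)/2)`. Hoeffding's
inequality bounds its probability by `2 exp(-2 n ε_n²) = 2 exp(-2 n^δ)`, and there `R_m` is
bounded because it is continuous on the compact interval `[ε₀, 1]`, which avoids `0`. Off the
event, `|(μ - p̄_n)/μ| ≤ ε_n/μ ≤ 1/2` for large `n`, and the remainder estimate of the series
`-log(1 - τ) = ∑ τ^k/k` gives `|R_m| ≤ 2 (ε_n/μ)^(m+1)`.
-/

open MeasureTheory ProbabilityTheory

/-- The Taylor remainder of the logarithm: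
`R_m(μ - x) = -log(x/μ) - ∑_{k=1}^m (μ - x)^k/(k μ^k)`. -/
noncomputable def taylorRem (m : ℕ) (μ x : ℝ) : ℝ :=
  -Real.log (x / μ) - ∑ k ∈ Finset.Icc 1 m, (μ - x) ^ k / ((k : ℝ) * μ ^ k)

open Filter Real Finset Topology

lemma taylorRem_eq_neg_sum_add_log (m : ℕ) {μ : ℝ} (hμ : μ ≠ 0) (x : ℝ) :
    taylorRem m μ x =
      -((∑ i ∈ range m, ((μ - x) / μ) ^ (i + 1) / (i + 1)) + log (1 - (μ - x) / μ)) := by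
  have hlog : 1 - (μ - x) / μ = x / μ := by field_simp; ring
  have hsum : ∑ k ∈ Icc 1 m, (μ - x) ^ k / ((k : ℝ) * μ ^ k)
      = ∑ i ∈ range m, ((μ - x) / μ) ^ (i + 1) / (i + 1) := by
    rw [← Ico_add_one_right_eq_Icc, sum_Ico_eq_sum_range]
    refine sum_congr rfl fun i _ => ?_
    rw [div_pow, div_div]
    push_cast
    ring_nf
  rw [taylorRem, hlog, hsum]
  ring

lemma abs_taylorRem_le_of_abs_sub_le (m : ℕ) {μ x ε : ℝ} (hμ : 0 < μ) (hx : |x - μ| ≤ ε)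
    (hε : ε ≤ μ / 2) : |taylorRem m μ x| ≤ 2 * (ε / μ) ^ (m + 1) := by
  have hτ : |(μ - x) / μ| ≤ ε / μ := by
    rw [abs_div, abs_of_pos hμ, abs_sub_comm]
    gcongr
  have hεμ : ε / μ ≤ 1 / 2 := by rw [div_le_iff₀ hμ]; linarith
  have hε0 : 0 ≤ ε := (abs_nonneg _).trans hx
  rw [taylorRem_eq_neg_sum_add_log m hμ.ne', abs_neg]
  calc _ ≤ |(μ - x) / μ| ^ (m + 1) / (1 - |(μ - x) / μ|) :=
        abs_log_sub_add_sum_range_le (by linarith) m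
    _ ≤ (ε / μ) ^ (m + 1) / (1 / 2) := by gcongr; linarith
    _ = 2 * (ε / μ) ^ (m + 1) := by ring

lemma continuousOn_taylorRem (m : ℕ) {μ : ℝ} (hμ : μ ≠ 0) :
    ContinuousOn (taylorRem m μ) {0}ᶜ :=
  ((continuousOn_id.div_const μ).log fun _ hx => div_ne_zero hx hμ).neg.sub
    (by fun_prop)

section

variable {Ω : Type*} [MeasurableSpace Ω] {P : Measure Ω} [IsProbabilityMeasure P]

lemma abs_integral_le_mul_measureReal_add {f : Ω → ℝ} {s : Set Ω} (hs : MeasurableSet s)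
    {M η : ℝ} (hM : ∀ ω ∈ s, |f ω| ≤ M) (hη : ∀ ω ∉ s, |f ω| ≤ η) (hη0 : 0 ≤ η) :
    |∫ ω, f ω ∂P| ≤ M * P.real s + η := by
  have hbound : ∀ ω, ‖f ω‖ ≤ s.indicator (fun _ => M) ω + η := fun ω => by
    by_cases hω : ω ∈ s
    · simpa [hω] using (hM ω hω).trans (le_add_of_nonneg_right hη0)
    · simpa [hω] using hη ω hω
  calc |∫ ω, f ω ∂P| ≤ ∫ ω, (s.indicator (fun _ => M) ω + η) ∂P :=
        norm_integral_le_of_norm_le (((integrable_const M).indicator hs).add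
          (integrable_const η)) (ae_of_all _ hbound)
    _ = M * P.real s + η := by
        rw [integral_add ((integrable_const M).indicator hs) (integrable_const η),
          integral_indicator_const M hs]
        simp [mul_comm]

lemma measureReal_abs_sum_range_div_sub_ge_le {X : ℕ → Ω → ℝ} (hX : iIndepFun X P)
    (hXm : ∀ i, AEMeasurable (X i) P) {a b : ℝ} (hXab : ∀ i, ∀ᵐ ω ∂P, X i ω ∈ Set.Icc a b)
    {μ : ℝ} (hXμ : ∀ i, P[X i] = μ) {n : ℕ} (hn : 0 < n) {ε : ℝ} (hε : 0 ≤ ε) :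
    P.real {ω | ε ≤ |(∑ i ∈ range n, X i ω) / n - μ|}
      ≤ 2 * exp (-2 * n * ε ^ 2 / (b - a) ^ 2) := by
  have hsubG : ∀ i, HasSubgaussianMGF (fun ω => X i ω - μ) ((‖b - a‖₊ / 2) ^ 2) P :=
    fun i => hXμ i ▸ hasSubgaussianMGF_of_mem_Icc (hXm i) (hXab i)
  have hY : iIndepFun (fun i ω => X i ω - μ) P :=
    hX.comp (fun _ x => x - μ) fun _ => measurable_sub_const μ
  have hupper := HasSubgaussianMGF.measure_sum_range_ge_le_of_iIndepFun hY
    (fun i _ => hsubG i) (n := n) (ε := n * ε) (by positivity)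
  have hlower : P.real {ω | n * ε ≤ ∑ i ∈ range n, -(X i ω - μ)} ≤ _ :=
    HasSubgaussianMGF.measure_sum_range_ge_le_of_iIndepFun
      (hY.comp (fun _ x => -x) fun _ => measurable_neg) (fun i _ => (hsubG i).neg) (n := n)
      (ε := n * ε) (by positivity)
  have hexp : -(n * ε) ^ 2 / (2 * n * ((‖b - a‖₊ / 2) ^ 2 : NNReal)) =
      -2 * n * ε ^ 2 / (b - a) ^ 2 := by
    push_cast
    rw [Real.norm_eq_abs, div_pow, sq_abs]
    field_simp
  have hsum : ∀ ω, ∑ i ∈ range n, (X i ω - μ) = n * ((∑ i ∈ range n, X i ω) / n - μ) := by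
    intro ω
    rw [sum_sub_distrib, sum_const, card_range, nsmul_eq_mul]
    field_simp
  have hcover : {ω | ε ≤ |(∑ i ∈ range n, X i ω) / n - μ|} ⊆
      {ω | n * ε ≤ ∑ i ∈ range n, (X i ω - μ)} ∪
        {ω | n * ε ≤ ∑ i ∈ range n, -(X i ω - μ)} := by
    intro ω hω
    simp only [Set.mem_ofPred_eq, le_abs] at hω
    simp only [Set.mem_union, Set.mem_ofPred_eq, sum_neg_distrib, hsum]
    rcases hω with h | h
    · exact Or.inl (by gcongr)
    · exact Or.inr (by rw [← mul_neg]; gcongr)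
  calc _ ≤ _ := measureReal_mono hcover
    _ ≤ _ := measureReal_union_le _ _
    _ ≤ 2 * exp (-2 * n * ε ^ 2 / (b - a) ^ 2) := by
        rw [← hexp]
        linarith

end

noncomputable def deviationLevel (δ : ℝ) (n : ℕ) : ℝ := (n : ℝ) ^ (-((1 - δ) / 2))

lemma deviationLevel_nonneg (δ : ℝ) (n : ℕ) : 0 ≤ deviationLevel δ n := by
  unfold deviationLevel
  positivity

lemma tendsto_deviationLevel {δ : ℝ} (hδ : δ < 1) :
    Tendsto (deviationLevel δ) atTop (𝓝 0) :=
  (tendsto_rpow_neg_atTop (by linarith)).comp tendsto_natCast_atTop_atTop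

lemma deviationLevel_pow (δ : ℝ) (n k : ℕ) :
    deviationLevel δ n ^ k = (n : ℝ) ^ (-(k * (1 - δ) / 2)) := by
  rw [deviationLevel, ← Real.rpow_natCast, ← Real.rpow_mul (Nat.cast_nonneg n)]
  ring_nf

lemma natCast_mul_deviationLevel_sq (δ : ℝ) {n : ℕ} (hn : 0 < n) :
    n * deviationLevel δ n ^ 2 = (n : ℝ) ^ δ := by
  rw [deviationLevel_pow]
  conv_rhs => rw [show δ = 1 + -(((2 : ℕ) : ℝ) * (1 - δ) / 2) by push_cast; ring]
  rw [Real.rpow_add (Nat.cast_pos.2 hn), Real.rpow_one]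

lemma sum_range_div_mem_Icc {f : ℕ → ℝ} {a b : ℝ} {n : ℕ} (hn : 0 < n)
    (hf : ∀ i, f i ∈ Set.Icc a b) : (∑ i ∈ range n, f i) / n ∈ Set.Icc a b := by
  have hne : (range n).Nonempty := nonempty_range_iff.2 hn.ne'
  have hmean := expect_eq_sum_div_card (range n) f
  rw [card_range] at hmean
  rw [← hmean]
  exact ⟨le_expect hne fun i _ => (hf i).1, expect_le hne fun i _ => (hf i).2⟩

theorem remainder_expectation_bound_general
    {Ω : Type*} [MeasurableSpace Ω] (P : Measure Ω) [IsProbabilityMeasure P]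
    (ε₀ : ℝ) (hε₀ : 0 < ε₀)
    (p : ℕ → Ω → ℝ) (hmeas : ∀ i, Measurable (p i))
    (hrange : ∀ i ω, p i ω ∈ Set.Icc ε₀ 1)
    (hindep : iIndepFun p P)
    (hident : ∀ i, IdentDistrib (p i) (p 0) P P)
    (μ : ℝ) (hμ : μ = ∫ ω, p 0 ω ∂P)
    (m : ℕ) (δ : ℝ) (hδ1 : δ < 1) :
    ∃ C₁ > (0 : ℝ), ∃ C₂ > (0 : ℝ), ∃ N : ℕ, 0 < N ∧ ∀ n : ℕ, N ≤ n →
      |∫ ω, taylorRem m μ ((∑ i ∈ Finset.range n, p i ω) / n) ∂P|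
        ≤ C₁ * Real.exp (-2 * (n : ℝ) ^ δ)
          + C₂ * (n : ℝ) ^ (-((m + 1 : ℝ) * (1 - δ) / 2)) := by
  have hbdd : ∀ i, ∀ᵐ ω ∂P, p i ω ∈ Set.Icc ε₀ 1 := fun i => ae_of_all _ (hrange i)
  have hμ_mem : μ ∈ Set.Icc ε₀ 1 := hμ ▸ (convex_Icc ε₀ 1).integral_mem isClosed_Icc (hbdd 0)
    (Integrable.of_mem_Icc ε₀ 1 (hmeas 0).aemeasurable (hbdd 0))
  have hμ0 : 0 < μ := hε₀.trans_le hμ_mem.1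
  obtain ⟨M, hM⟩ := (isCompact_Icc (a := ε₀) (b := 1)).exists_bound_of_continuousOn
    ((continuousOn_taylorRem m hμ0.ne').mono fun x hx => (hε₀.trans_le hx.1).ne')
  set ε := deviationLevel δ
  obtain ⟨N, hN⟩ := eventually_atTop.1 ((eventually_gt_atTop 0).and
    ((tendsto_deviationLevel hδ1).eventually_le_const (half_pos hμ0)))
  refine ⟨2 * max M 1, by positivity, 2 / μ ^ (m + 1), by positivity, N + 1, N.succ_pos,
    fun n hn => ?_⟩
  obtain ⟨hn0, hεμ⟩ := hN n (by omega)
  have htail := measureReal_abs_sum_range_div_sub_ge_le hindep (fun i => (hmeas i).aemeasurable)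
    (fun i => (hbdd i).mono fun _ h => Set.Icc_subset_Icc hε₀.le le_rfl h)
    (fun i => (hident i).integral_eq.trans hμ.symm) hn0 (deviationLevel_nonneg δ n)
  rw [sub_zero, one_pow, div_one, mul_assoc, natCast_mul_deviationLevel_sq δ hn0] at htail
  calc _ ≤ max M 1 * P.real {ω | ε n ≤ |(∑ i ∈ range n, p i ω) / n - μ|}
        + 2 * (ε n / μ) ^ (m + 1) :=
        abs_integral_le_mul_measureReal_add (measurableSet_le measurable_const (by fun_prop))
          (fun ω _ => (Real.norm_eq_abs _ ▸ hM _ (sum_range_div_mem_Icc hn0 (hrange · ω))).trans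
            (le_max_left _ _))
          (fun ω hω => abs_taylorRem_le_of_abs_sub_le m hμ0 (not_le.1 hω).le hεμ)
          (by have := deviationLevel_nonneg δ n; positivity)
    _ ≤ max M 1 * (2 * Real.exp (-2 * (n : ℝ) ^ δ)) + 2 * (ε n / μ) ^ (m + 1) := by gcongr
    _ = _ := by rw [div_pow, deviationLevel_pow]; push_cast; ring

/-- For i.i.d. `p i` with values in `[ε₀, 1]`, `ε₀ > 0`, mean `μ`, any `m ≥ 1` and `0 < δ < 1`,
there are constants `C₁, C₂ > 0` and `N` such that for all `n ≥ N`,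
`|E[R_m(μ - p̄_n)]| ≤ C₁ exp(-2 n^δ) + C₂ n^{-(m+1)(1-δ)/2}`. -/
theorem remainder_expectation_bound
    {Ω : Type*} [MeasurableSpace Ω] (P : Measure Ω) [IsProbabilityMeasure P]
    (ε₀ : ℝ) (hε₀ : 0 < ε₀)
    (p : ℕ → Ω → ℝ) (hmeas : ∀ i, Measurable (p i))
    (hrange : ∀ i ω, p i ω ∈ Set.Icc ε₀ 1)
    (hindep : iIndepFun p P)
    (hident : ∀ i, IdentDistrib (p i) (p 0) P P)
    (μ : ℝ) (hμ : μ = ∫ ω, p 0 ω ∂P)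
    (m : ℕ) (hm : 1 ≤ m) (δ : ℝ) (hδ0 : 0 < δ) (hδ1 : δ < 1) :
    ∃ C₁ > (0 : ℝ), ∃ C₂ > (0 : ℝ), ∃ N : ℕ, 0 < N ∧ ∀ n : ℕ, N ≤ n →
      |∫ ω, taylorRem m μ ((∑ i ∈ Finset.range n, p i ω) / n) ∂P|
        ≤ C₁ * Real.exp (-2 * (n : ℝ) ^ δ)
          + C₂ * (n : ℝ) ^ (-((m + 1 : ℝ) * (1 - δ) / 2)) :=
  remainder_expectation_bound_general P ε₀ hε₀ p hmeas hrange hindep hident μ hμ m δ hδ1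
end

section
/- Let T be a nonempty compact topological space and let c : T → ℝ and b : T → ℝ be continuous. For each positive integer n define PL_n(τ) = c(τ) + b(τ)/n and the lower envelope LE_n = min_{τ ∈ T} PL_n(τ). Then there exist real numbers c* and b* such that LE_n = c* + b*/n + o(1/n) as n → ∞; that is, n·(LE_n − c* − b*/n) → 0 as n → ∞. Moreover, one may take c* = c(τ*) and b* = b(τ*) for some τ* ∈ T. -/
/-!
Take `τ*` minimizing `c`, and among the minimizers of `c` minimizing `b`. Comparing a minimizer
`σ n` of `PL n` with `τ*` gives `b (σ n) - b τ* ≤ n (LE n - PL n τ*) ≤ 0`, so it suffices that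
`b (σ n) → b τ*`. Since `c (σ n) ≤ min c + O(1/n)`, the points `σ n` eventually enter every
neighbourhood of the compact set `argmin c`, on which `b ≥ b τ*`; with `b (σ n) ≤ b τ*` this
gives the limit.
-/

open Filter Topology

section

variable {T : Type*} {c b : T → ℝ} {σ : ℕ → T}

def IsLexMinimizer (c b : T → ℝ) (τs : T) : Prop :=
  (∀ τ, c τs ≤ c τ) ∧ ∀ τ, c τ ≤ c τs → b τs ≤ b τ

def IsPowerLawMinimizing (c b : T → ℝ) (σ : ℕ → T) : Prop :=
  ∀ n : ℕ, 0 < n → ∀ τ, c (σ n) + b (σ n) / n ≤ c τ + b τ / n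

theorem IsPowerLawMinimizing.apply_le_of_forall_le (hσ : IsPowerLawMinimizing c b σ) {τs : T}
    (hcτs : ∀ τ, c τs ≤ c τ) {n : ℕ} (hn : 0 < n) : b (σ n) ≤ b τs := by
  have hdiv : b (σ n) / n ≤ b τs / n := by linarith [hσ n hn τs, hcτs (σ n)]
  exact (div_le_div_iff_of_pos_right (Nat.cast_pos.2 hn)).1 hdiv

variable [TopologicalSpace T] [CompactSpace T]

theorem exists_isLexMinimizer [Nonempty T] (hc : Continuous c) (hb : Continuous b) :
    ∃ τs, IsLexMinimizer c b τs := by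
  obtain ⟨τ₀, -, hτ₀⟩ := isCompact_univ.exists_isMinOn Set.univ_nonempty hc.continuousOn
  have hS : IsCompact {τ | c τ ≤ c τ₀} := (isClosed_le hc continuous_const).isCompact
  obtain ⟨τs, hτsS, hτs⟩ := hS.exists_isMinOn ⟨τ₀, le_refl (c τ₀)⟩ hb.continuousOn
  have hcτs : c τs = c τ₀ := le_antisymm hτsS (hτ₀ trivial)
  exact ⟨τs, fun τ => hcτs ▸ hτ₀ trivial, fun τ hτ => hτs (hcτs ▸ hτ)⟩

theorem Continuous.tendsto_nhdsSet_sublevel_of_tendsto {ι : Type*} {l : Filter ι}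
    (hc : Continuous c) {m : ℝ} {x : ι → T} (hx : Tendsto (c ∘ x) l (𝓝 m)) :
    Tendsto x l (𝓝ˢ {τ | c τ ≤ m}) := by
  refine (hasBasis_nhdsSet _).tendsto_right_iff.2 fun U ⟨hU, hmU⟩ => ?_
  rcases (Uᶜ).eq_empty_or_nonempty with hempty | hne
  · simp [Set.compl_empty_iff.mp hempty]
  obtain ⟨τ, hτU, hτ⟩ := hU.isClosed_compl.isCompact.exists_isMinOn hne hc.continuousOn
  have hmτ : m < c τ := lt_of_not_ge fun h => hτU (hmU h)
  filter_upwards [hx.eventually (gt_mem_nhds hmτ)] with i hi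
  by_contra hxi
  exact (hτ hxi).not_gt hi

namespace IsPowerLawMinimizing

variable (hσ : IsPowerLawMinimizing c b σ) (hb : Continuous b)
include hσ hb

theorem tendsto_comp_of_forall_le {τ₀ : T} (hτ₀ : ∀ τ, c τ₀ ≤ c τ) :
    Tendsto (c ∘ σ) atTop (𝓝 (c τ₀)) := by
  obtain ⟨B, hB⟩ := (isCompact_range hb).bddBelow
  have hupper : ∀ n : ℕ, 0 < n → c (σ n) ≤ c τ₀ + (b τ₀ - B) / n := fun n hn => by
    have hBσ : B / n ≤ b (σ n) / n := by gcongr; exact hB ⟨σ n, rfl⟩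
    linarith [hσ n hn τ₀, sub_div (b τ₀) B (n : ℝ)]
  have hlim : Tendsto (fun n : ℕ => c τ₀ + (b τ₀ - B) / n) atTop (𝓝 (c τ₀)) := by
    simpa using tendsto_const_nhds.add
      (tendsto_const_nhds.div_atTop (tendsto_natCast_atTop_atTop (R := ℝ)))
  refine tendsto_of_tendsto_of_tendsto_of_le_of_le' tendsto_const_nhds hlim
    (Eventually.of_forall fun n => hτ₀ (σ n)) ?_
  filter_upwards [eventually_gt_atTop 0] with n hn using hupper n hn

variable (hc : Continuous c) {τs : T} (hτs : IsLexMinimizer c b τs)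
include hc hτs

theorem tendsto_comp_of_isLexMinimizer : Tendsto (b ∘ σ) atTop (𝓝 (b τs)) := by
  have hargmin := hc.tendsto_nhdsSet_sublevel_of_tendsto (hσ.tendsto_comp_of_forall_le hb hτs.1)
  refine tendsto_order.2 ⟨fun a ha => hargmin ((isOpen_lt continuous_const hb).mem_nhdsSet.2
    fun τ hτ => ha.trans_le (hτs.2 τ hτ)), fun a ha => ?_⟩
  filter_upwards [eventually_gt_atTop 0] with n hn
  exact (hσ.apply_le_of_forall_le hτs.1 hn).trans_lt ha

theorem tendsto_mul_sub_of_isLexMinimizer :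
    Tendsto (fun n : ℕ => (n : ℝ) * (c (σ n) + b (σ n) / n - c τs - b τs / n)) atTop
      (𝓝 0) := by
  have hlower : Tendsto (fun n => b (σ n) - b τs) atTop (𝓝 0) := by
    simpa using (hσ.tendsto_comp_of_isLexMinimizer hb hc hτs).sub_const (b τs)
  refine tendsto_of_tendsto_of_tendsto_of_le_of_le' hlower tendsto_const_nhds ?_ ?_
  all_goals filter_upwards [eventually_gt_atTop 0] with n hn
  · have hn' : (n : ℝ) ≠ 0 := Nat.cast_ne_zero.2 hn.ne'
    have hexpand : (n : ℝ) * (c (σ n) + b (σ n) / n - c τs - b τs / n)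
        = n * (c (σ n) - c τs) + (b (σ n) - b τs) := by
      field_simp
      ring
    rw [hexpand]
    linarith [mul_nonneg n.cast_nonneg (sub_nonneg.2 (hτs.1 (σ n)))]
  · exact mul_nonpos_of_nonneg_of_nonpos n.cast_nonneg (by linarith [hσ n hn τs])

end IsPowerLawMinimizing

end

theorem lower_envelope_power_law_general
    {T : Type*} [TopologicalSpace T] [CompactSpace T] [Nonempty T]
    (c b : T → ℝ) (hc : Continuous c) (hb : Continuous b)
    (PL : ℕ → T → ℝ) (hPL : ∀ n τ, PL n τ = c τ + b τ / n)
    (LE : ℕ → ℝ) (hLE : ∀ n : ℕ, 0 < n → IsLeast (Set.range (PL n)) (LE n)) :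
    ∃ τstar : T,
      Tendsto (fun n : ℕ => (n : ℝ) * (LE n - c τstar - b τstar / n)) atTop (𝓝 0) := by
  obtain ⟨τs, hτs⟩ := exists_isLexMinimizer hc hb
  choose! σ hσ using fun n (hn : 0 < n) => (hLE n hn).1
  have hσmin : IsPowerLawMinimizing c b σ := by
    intro n hn τ
    rw [← hPL, ← hPL, hσ n hn]
    exact (hLE n hn).2 ⟨τ, rfl⟩
  refine ⟨τs, (hσmin.tendsto_mul_sub_of_isLexMinimizer hb hc hτs).congr' ?_⟩
  filter_upwards [eventually_gt_atTop 0] with n hn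
  rw [← hPL, hσ n hn]

/-- **Proposition 2.** Let `T` be a nonempty compact (and, for the "moreover" clause,
sequentially compact) space and `c, b : T → ℝ` continuous. If `LE n` is the minimum over
`τ ∈ T` of the power laws `PL n τ = c τ + b τ / n`, then `LE n = c* + b*/n + o(1/n)` as
`n → ∞`, where `c* = c τ*` and `b* = b τ*` for some `τ* ∈ T`. -/
theorem lower_envelope_power_law
    {T : Type*} [TopologicalSpace T] [CompactSpace T] [SeqCompactSpace T] [Nonempty T]
    (c b : T → ℝ) (hc : Continuous c) (hb : Continuous b)
    (PL : ℕ → T → ℝ) (hPL : ∀ n τ, PL n τ = c τ + b τ / n)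
    (LE : ℕ → ℝ) (hLE : ∀ n : ℕ, 0 < n → IsLeast (Set.range (PL n)) (LE n)) :
    ∃ τstar : T,
      Tendsto (fun n : ℕ => (n : ℝ) * (LE n - c τstar - b τstar / n)) atTop (𝓝 0) :=
  lower_envelope_power_law_general c b hc hb PL hPL LE hLE
end

section
/- Let T be a nonempty compact metric space and let c : T → ℝ and b : T → ℝ be continuous. For each positive integer n define PL_n(τ) = c(τ) + b(τ)/n, and let τ_n ∈ T minimize PL_n over T. Suppose a subsequence τ_{n_k} converges to τ* ∈ T. Then the full sequences converge: c(τ_n) → c(τ*) with c(τ_n) nonincreasing, and b(τ_n) → b(τ*) with b(τ_n) nondecreasing; in particular c(τ_n) ≥ c(τ*) and b(τ_n) ≤ b(τ*) for all n. -/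
/-!
Comparing the optimality of `τ n` against `τ m` and of `τ m` against `τ n` (for `n < m`) shows
that along the minimizers the constant term `c` can only decrease and the coefficient `b` can
only increase. A monotone sequence with a convergent subsequence converges to the same limit,
and by continuity `c (τ (φ k)) → c τstar` and `b (τ (φ k)) → b τstar`.
-/

open Filter Topology

theorem le_and_le_of_add_mul_le_of_add_mul_le {T : Type*} (c b : T → ℝ) {s t : ℝ} {x y : T}
    (ht : 0 ≤ t) (hts : t < s) (hx : c x + s * b x ≤ c y + s * b y)
    (hy : c y + t * b y ≤ c x + t * b x) : c y ≤ c x ∧ b x ≤ b y := by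
  have hb : b x ≤ b y := by nlinarith
  refine ⟨?_, hb⟩
  nlinarith [mul_le_mul_of_nonneg_left hb ht]

section MonotoneTail

variable {α : Type*} [TopologicalSpace α] [ConditionallyCompleteLinearOrder α] [OrderTopology α]
  {u : ℕ → α} {φ : ℕ → ℕ} {l : α}

theorem tendsto_of_monotone_add_of_tendsto_comp [NoMaxOrder α] (N : ℕ)
    (hu : Monotone fun n => u (n + N)) (hφ : Tendsto φ atTop atTop)
    (h : Tendsto (u ∘ φ) atTop (𝓝 l)) : Tendsto u atTop (𝓝 l) := by
  rw [← tendsto_add_atTop_iff_nat N,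
    tendsto_iff_tendsto_subseq_of_monotone hu (tendsto_sub_atTop_nat N |>.comp hφ)]
  refine h.congr' ?_
  filter_upwards [hφ.eventually_ge_atTop N] with k hk
  simp only [Function.comp_apply, Nat.sub_add_cancel hk]

theorem tendsto_of_antitone_add_of_tendsto_comp [NoMinOrder α] (N : ℕ)
    (hu : Antitone fun n => u (n + N)) (hφ : Tendsto φ atTop atTop)
    (h : Tendsto (u ∘ φ) atTop (𝓝 l)) : Tendsto u atTop (𝓝 l) :=
  tendsto_of_monotone_add_of_tendsto_comp (α := αᵒᵈ) N hu hφ h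

end MonotoneTail

theorem minimizers_tradeoff {T : Type*} {c b : T → ℝ} {PL : ℕ → T → ℝ}
    (hPL : ∀ n τ, PL n τ = c τ + b τ / n) {τ : ℕ → T}
    (hmin : ∀ n : ℕ, 0 < n → ∀ σ : T, PL n (τ n) ≤ PL n σ) {m n : ℕ} (hn : 0 < n) (hnm : n ≤ m) :
    c (τ m) ≤ c (τ n) ∧ b (τ n) ≤ b (τ m) := by
  obtain rfl | hlt := hnm.eq_or_lt
  · exact ⟨le_rfl, le_rfl⟩
  have hPL' : ∀ k σ, PL k σ = c σ + (k : ℝ)⁻¹ * b σ := fun k σ => by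
    rw [hPL, div_eq_inv_mul]
  refine le_and_le_of_add_mul_le_of_add_mul_le c b (inv_nonneg.2 m.cast_nonneg)
    (inv_strictAnti₀ (Nat.cast_pos.2 hn) (Nat.cast_lt.2 hlt)) ?_ ?_
  · simpa only [hPL'] using hmin n hn (τ m)
  · simpa only [hPL'] using hmin m (hn.trans hlt) (τ n)

theorem minimizers_converge_general
    {T : Type*} [MetricSpace T]
    (c b : T → ℝ) (hc : Continuous c) (hb : Continuous b)
    (PL : ℕ → T → ℝ) (hPL : ∀ n τ, PL n τ = c τ + b τ / n)
    (τ : ℕ → T) (hmin : ∀ n : ℕ, 0 < n → ∀ σ : T, PL n (τ n) ≤ PL n σ)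
    (τstar : T) (φ : ℕ → ℕ) (hφ : StrictMono φ)
    (hconv : Tendsto (fun k => τ (φ k)) atTop (𝓝 τstar)) :
    Tendsto (fun n => c (τ n)) atTop (𝓝 (c τstar)) ∧
    (∀ m n : ℕ, 0 < n → n ≤ m → c (τ m) ≤ c (τ n)) ∧
    Tendsto (fun n => b (τ n)) atTop (𝓝 (b τstar)) ∧
    (∀ m n : ℕ, 0 < n → n ≤ m → b (τ n) ≤ b (τ m)) ∧
    (∀ n : ℕ, 0 < n → c τstar ≤ c (τ n) ∧ b (τ n) ≤ b τstar) := by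
  have hc_anti : ∀ m n : ℕ, 0 < n → n ≤ m → c (τ m) ≤ c (τ n) := fun _ _ hn hnm =>
    (minimizers_tradeoff hPL hmin hn hnm).1
  have hb_mono : ∀ m n : ℕ, 0 < n → n ≤ m → b (τ n) ≤ b (τ m) := fun _ _ hn hnm =>
    (minimizers_tradeoff hPL hmin hn hnm).2
  have hc_lim : Tendsto (fun n => c (τ n)) atTop (𝓝 (c τstar)) :=
    tendsto_of_antitone_add_of_tendsto_comp 1
      (fun i j hij => hc_anti _ _ i.succ_pos (by omega)) hφ.tendsto_atTop
      ((hc.tendsto τstar).comp hconv)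
  have hb_lim : Tendsto (fun n => b (τ n)) atTop (𝓝 (b τstar)) :=
    tendsto_of_monotone_add_of_tendsto_comp 1
      (fun i j hij => hb_mono _ _ i.succ_pos (by omega)) hφ.tendsto_atTop
      ((hb.tendsto τstar).comp hconv)
  refine ⟨hc_lim, hc_anti, hb_lim, hb_mono, fun n hn => ⟨?_, ?_⟩⟩
  · exact le_of_tendsto hc_lim ((eventually_ge_atTop n).mono fun m hm => hc_anti m n hn hm)
  · exact ge_of_tendsto hb_lim ((eventually_ge_atTop n).mono fun m hm => hb_mono m n hn hm)

/-- On a nonempty compact metric space `T`, let `τ n` minimize `PL n τ = c τ + b τ / n` for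
each positive integer `n`, and suppose a subsequence `τ (φ k)` converges to `τ*`. Then the
full sequences converge: `c (τ n) → c τ*` with `c (τ n)` nonincreasing, and
`b (τ n) → b τ*` with `b (τ n)` nondecreasing; in particular `c (τ n) ≥ c τ*` and
`b (τ n) ≤ b τ*` for all `n ≥ 1`. -/
theorem minimizers_converge
    {T : Type*} [MetricSpace T] [CompactSpace T] [Nonempty T]
    (c b : T → ℝ) (hc : Continuous c) (hb : Continuous b)
    (PL : ℕ → T → ℝ) (hPL : ∀ n τ, PL n τ = c τ + b τ / n)
    (τ : ℕ → T) (hmin : ∀ n : ℕ, 0 < n → ∀ σ : T, PL n (τ n) ≤ PL n σ)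
    (τstar : T) (φ : ℕ → ℕ) (hφ : StrictMono φ) (hφ1 : 0 < φ 0)
    (hconv : Tendsto (fun k => τ (φ k)) atTop (𝓝 τstar)) :
    Tendsto (fun n => c (τ n)) atTop (𝓝 (c τstar)) ∧
    (∀ m n : ℕ, 0 < n → n ≤ m → c (τ m) ≤ c (τ n)) ∧
    Tendsto (fun n => b (τ n)) atTop (𝓝 (b τstar)) ∧
    (∀ m n : ℕ, 0 < n → n ≤ m → b (τ n) ≤ b (τ m)) ∧
    (∀ n : ℕ, 0 < n → c τstar ≤ c (τ n) ∧ b (τ n) ≤ b τstar) :=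
  minimizers_converge_general c b hc hb PL hPL τ hmin τstar φ hφ hconv
end

section
/- Let K ≥ 2 be an integer and ε > 0 with ε ≤ 1/K, and let p_1, p_2, ... be independent identically distributed random vectors with values in the set Δ_ε = {q ∈ [ε, 1]^K : ∑_{k=1}^K q_k = 1}. Fix a temperature τ > 0 and define the tempered correct-class probability p_i*(τ) = (p_{i,1})^{1/τ} / ∑_{k=1}^K (p_{i,k})^{1/τ} (the first class is the correct one). Then: (a) for every i, p_i*(τ) ∈ [ε', 1] where ε' = ε^{1/τ}/K > 0; and (b) with μ(τ) = E[p_1*(τ)] and σ(τ)² = Var(p_1*(τ)), the tempered ensemble NLL satisfies E[−log((1/n)·∑_{i=1}^n p_i*(τ))] = −log μ(τ) + (σ(τ)²/(2·μ(τ)²))·(1/n) + O(1/n²) as n → ∞, where the coefficient σ(τ)²/(2·μ(τ)²) of 1/n is nonnegative. -/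
/-!
Tempering sends a probability vector with entries in `[ε, 1]` to one whose correct-class entry
lies in `[ε^{1/τ}/K, 1]`, so it suffices to expand `E[-log X̄ₙ]` for i.i.d. `Xᵢ ∈ [c, 1]`.
Write `X̄ₙ = μ (1 + u)` with `u = Sₙ/(nμ)`, where `Sₙ` is the centred partial sum. Since
`1 + u ≥ c/μ`, the cubic Taylor polynomial of `log (1 + u)` has remainder at most `u⁴ μ / c`,
and the moments `E Sₙ = 0`, `E Sₙ² = n σ²`, `E Sₙ³ = n m₃`, `E Sₙ⁴ = n m₄ + 3n(n-1) σ⁴` give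
`E[log (1 + u)] = -σ²/(2μ²n) + O(1/n²)`.
-/

open MeasureTheory ProbabilityTheory Finset Real Filter Asymptotics

open Set in
theorem Real.abs_log_sub_cubic_le {c x : ℝ} (hc : 0 < c) (hc1 : c ≤ 1) (hx : c ≤ x) :
    |log x - ((x - 1) - (x - 1) ^ 2 / 2 + (x - 1) ^ 3 / 3)| ≤ (x - 1) ^ 4 / c := by
  set g : ℝ → ℝ := fun t => log t - ((t - 1) - (t - 1) ^ 2 / 2 + (t - 1) ^ 3 / 3)
  have hct : ∀ t ∈ uIcc 1 x, c ≤ t := fun t ht => (le_min hc1 hx).trans ht.1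
  have hderiv : ∀ t ∈ uIcc 1 x, HasDerivWithinAt g (-(t - 1) ^ 3 / t) (uIcc 1 x) t := by
    intro t ht
    have ht0 : t ≠ 0 := (hc.trans_le (hct t ht)).ne'
    have hsub := (hasDerivAt_id t).sub_const 1
    refine (((hasDerivAt_log ht0).sub ((hsub.sub ((hsub.pow 2).div_const 2)).add
      ((hsub.pow 3).div_const 3))).congr_deriv ?_).hasDerivWithinAt
    simp only [id, Nat.cast_ofNat]
    field_simp
    ring
  have hbound : ∀ t ∈ uIcc 1 x, ‖-(t - 1) ^ 3 / t‖ ≤ |x - 1| ^ 3 / c := by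
    intro t ht
    rw [norm_div, norm_neg, norm_pow, Real.norm_eq_abs,
      Real.norm_of_nonneg (hc.le.trans (hct t ht))]
    exact div_le_div₀ (by positivity) (pow_le_pow_left₀ (abs_nonneg _)
      (abs_sub_left_of_mem_uIcc ht) 3) hc (hct t ht)
  have key := (convex_uIcc 1 x).norm_image_sub_le_of_norm_hasDerivWithin_le hderiv hbound
    left_mem_uIcc right_mem_uIcc
  simp only [g, log_one, sub_self, Real.norm_eq_abs] at key
  calc _ ≤ |x - 1| ^ 3 / c * |x - 1| := by simpa using key
    _ = (x - 1) ^ 4 / c := by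
      rw [div_mul_eq_mul_div, ← pow_succ, pow_abs,
        abs_of_nonneg (by positivity : (0 : ℝ) ≤ (x - 1) ^ 4)]

/-- `softmax (log v / τ)` at `i`, written with `t = 1 / τ`. -/
noncomputable def temperedProb {ι : Type*} [Fintype ι] (t : ℝ) (i : ι) (v : ι → ℝ) : ℝ :=
  v i ^ t / ∑ k, v k ^ t

theorem measurable_temperedProb {ι : Type*} [Fintype ι] (t : ℝ) (i : ι) :
    Measurable (temperedProb t i) := by
  unfold temperedProb
  fun_prop

theorem temperedProb_mem_Icc {ι : Type*} [Fintype ι] {ε t : ℝ} {v : ι → ℝ} (hε : 0 < ε)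
    (ht : 0 ≤ t) (hv : ∀ k, v k ∈ Set.Icc ε 1) (i : ι) :
    temperedProb t i v ∈ Set.Icc (ε ^ t / Fintype.card ι) 1 := by
  have hpos : ∀ k, 0 < v k ^ t := fun k => rpow_pos_of_pos (hε.trans_le (hv k).1) t
  have hsum_pos : 0 < ∑ k, v k ^ t := sum_pos (fun k _ => hpos k) ⟨i, mem_univ i⟩
  have hsum_le : ∑ k, v k ^ t ≤ Fintype.card ι := by
    simpa using sum_le_sum fun k (_ : k ∈ univ) =>
      rpow_le_one (hε.le.trans (hv k).1) (hv k).2 ht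
  have hi : ε ^ t ≤ v i ^ t := rpow_le_rpow hε.le (hv i).1 ht
  exact ⟨div_le_div₀ (hpos i).le hi hsum_pos hsum_le,
    (div_le_one hsum_pos).2 (single_le_sum (fun k _ => (hpos k).le) (mem_univ i))⟩

section LogTaylor

variable {Ω : Type*} [MeasurableSpace Ω] {P : Measure Ω} {u : Ω → ℝ} {c : ℝ}

theorem integrable_log_one_add_sub_cubic (hc : 0 < c) (hc1 : c ≤ 1) (hu : ∀ ω, c ≤ 1 + u ω)
    (h1 : Integrable u P) (h4 : Integrable (fun ω => u ω ^ 4) P) :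
    Integrable (fun ω => log (1 + u ω) - (u ω - u ω ^ 2 / 2 + u ω ^ 3 / 3)) P := by
  refine (h4.div_const c).mono' ?_ (ae_of_all _ fun ω => ?_)
  · have hu_meas := h1.aemeasurable
    exact (by fun_prop : AEMeasurable _ P).aestronglyMeasurable
  · simpa using abs_log_sub_cubic_le hc hc1 (hu ω)

theorem integrable_log_one_add (hc : 0 < c) (hc1 : c ≤ 1) (hu : ∀ ω, c ≤ 1 + u ω)
    (h1 : Integrable u P) (h2 : Integrable (fun ω => u ω ^ 2) P)
    (h3 : Integrable (fun ω => u ω ^ 3) P) (h4 : Integrable (fun ω => u ω ^ 4) P) :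
    Integrable (fun ω => log (1 + u ω)) P :=
  ((integrable_log_one_add_sub_cubic hc hc1 hu h1 h4).add
    ((h1.sub (h2.div_const 2)).add (h3.div_const 3))).congr (ae_of_all _ fun ω => by simp)

theorem abs_integral_log_one_add_sub_le (hc : 0 < c) (hc1 : c ≤ 1) (hu : ∀ ω, c ≤ 1 + u ω)
    (h1 : Integrable u P) (h2 : Integrable (fun ω => u ω ^ 2) P)
    (h3 : Integrable (fun ω => u ω ^ 3) P) (h4 : Integrable (fun ω => u ω ^ 4) P) :
    |∫ ω, log (1 + u ω) ∂P - (∫ ω, u ω ∂P - (∫ ω, u ω ^ 2 ∂P) / 2 + (∫ ω, u ω ^ 3 ∂P) / 3)|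
      ≤ (∫ ω, u ω ^ 4 ∂P) / c := by
  have h12 : Integrable (fun ω => u ω - u ω ^ 2 / 2) P := h1.sub (h2.div_const 2)
  have hpoly : Integrable (fun ω => u ω - u ω ^ 2 / 2 + u ω ^ 3 / 3) P := h12.add (h3.div_const 3)
  calc _ = |∫ ω, log (1 + u ω) - (u ω - u ω ^ 2 / 2 + u ω ^ 3 / 3) ∂P| := by
        rw [integral_sub (integrable_log_one_add hc hc1 hu h1 h2 h3 h4) hpoly,
          integral_add h12 (h3.div_const 3), integral_sub h1 (h2.div_const 2),
          integral_div, integral_div]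
    _ ≤ ∫ ω, |log (1 + u ω) - (u ω - u ω ^ 2 / 2 + u ω ^ 3 / 3)| ∂P :=
        abs_integral_le_integral_abs
    _ ≤ ∫ ω, u ω ^ 4 / c ∂P :=
        integral_mono (integrable_log_one_add_sub_cubic hc hc1 hu h1 h4).abs (h4.div_const c)
          fun ω => by simpa using abs_log_sub_cubic_le hc hc1 (hu ω)
    _ = (∫ ω, u ω ^ 4 ∂P) / c := integral_div _ _

end LogTaylor

namespace ProbabilityTheory

variable {Ω : Type*} [MeasurableSpace Ω] {P : Measure Ω}

theorem IndepFun.integrable_pow_mul_pow {S Y : Ω → ℝ} (hSY : IndepFun S Y P) {a b : ℕ}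
    (hS : Integrable (fun ω => S ω ^ a) P) (hY : Integrable (fun ω => Y ω ^ b) P) :
    Integrable (fun ω => S ω ^ a * Y ω ^ b) P :=
  (hSY.comp (measurable_id.pow_const a) (measurable_id.pow_const b)).integrable_mul hS hY

theorem IndepFun.integral_pow_mul_pow {S Y : Ω → ℝ} (hSY : IndepFun S Y P) {a b : ℕ}
    (hS : Integrable (fun ω => S ω ^ a) P) (hY : Integrable (fun ω => Y ω ^ b) P) :
    ∫ ω, S ω ^ a * Y ω ^ b ∂P = (∫ ω, S ω ^ a ∂P) * ∫ ω, Y ω ^ b ∂P :=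
  (hSY.comp (measurable_id.pow_const a) (measurable_id.pow_const b)
    ).integral_fun_mul_eq_mul_integral hS.aestronglyMeasurable hY.aestronglyMeasurable

theorem IndepFun.integrable_add_pow {S Y : Ω → ℝ} (hSY : IndepFun S Y P)
    (hS : ∀ j : ℕ, Integrable (fun ω => S ω ^ j) P) (hY : ∀ j : ℕ, Integrable (fun ω => Y ω ^ j) P)
    (k : ℕ) : Integrable (fun ω => (S ω + Y ω) ^ k) P := by
  simp_rw [add_pow]
  exact integrable_finsetSum _ fun j _ => (hSY.integrable_pow_mul_pow (hS j) (hY _)).mul_const _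

theorem IndepFun.integral_add_pow {S Y : Ω → ℝ} (hSY : IndepFun S Y P)
    (hS : ∀ j : ℕ, Integrable (fun ω => S ω ^ j) P) (hY : ∀ j : ℕ, Integrable (fun ω => Y ω ^ j) P)
    (k : ℕ) : ∫ ω, (S ω + Y ω) ^ k ∂P
      = ∑ j ∈ range (k + 1), (∫ ω, S ω ^ j ∂P) * (∫ ω, Y ω ^ (k - j) ∂P) * k.choose j := by
  simp_rw [add_pow]
  rw [integral_finsetSum _ fun j _ => (hSY.integrable_pow_mul_pow (hS j) (hY _)).mul_const _]
  simp_rw [integral_mul_const, hSY.integral_pow_mul_pow (hS _) (hY _)]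

theorem IdentDistrib.integrable_pow {X X' : Ω → ℝ} (h : IdentDistrib X X' P P) {j : ℕ}
    (hint : Integrable (fun ω => X' ω ^ j) P) : Integrable (fun ω => X ω ^ j) P :=
  (h.comp (measurable_id.pow_const j)).integrable_iff.2 hint

theorem IdentDistrib.integral_pow {X X' : Ω → ℝ} (h : IdentDistrib X X' P P) (j : ℕ) :
    ∫ ω, X ω ^ j ∂P = ∫ ω, X' ω ^ j ∂P :=
  (h.comp (measurable_id.pow_const j)).integral_eq

variable {Y : ℕ → Ω → ℝ}

theorem iIndepFun.indepFun_fun_sum_range_succ (hindep : iIndepFun Y P)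
    (hmeas : ∀ i, AEMeasurable (Y i) P) (n : ℕ) :
    IndepFun (fun ω => ∑ i ∈ range n, Y i ω) (Y n) P := by
  simpa [Finset.sum_fn] using hindep.indepFun_sum_range_succ₀ hmeas n

variable [IsProbabilityMeasure P]

theorem iIndepFun.integrable_sum_range_pow (hindep : iIndepFun Y P)
    (hident : ∀ i, IdentDistrib (Y i) (Y 0) P P) (hint : ∀ j : ℕ, Integrable (fun ω => Y 0 ω ^ j) P)
    (n j : ℕ) : Integrable (fun ω => (∑ i ∈ range n, Y i ω) ^ j) P := by
  induction n generalizing j with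
  | zero => simp
  | succ n ih =>
    simp_rw [sum_range_succ]
    exact (hindep.indepFun_fun_sum_range_succ (fun i => (hident i).aemeasurable_fst) n
      ).integrable_add_pow ih (fun j => (hident n).integrable_pow (hint j)) j

theorem iIndepFun.integral_sum_range_succ_pow (hindep : iIndepFun Y P)
    (hident : ∀ i, IdentDistrib (Y i) (Y 0) P P) (hint : ∀ j : ℕ, Integrable (fun ω => Y 0 ω ^ j) P)
    (n k : ℕ) : ∫ ω, (∑ i ∈ range (n + 1), Y i ω) ^ k ∂P
      = ∑ j ∈ range (k + 1),
          (∫ ω, (∑ i ∈ range n, Y i ω) ^ j ∂P) * (∫ ω, Y 0 ω ^ (k - j) ∂P) * k.choose j := by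
  simp_rw [sum_range_succ _ n]
  rw [(hindep.indepFun_fun_sum_range_succ (fun i => (hident i).aemeasurable_fst) n).integral_add_pow
    (hindep.integrable_sum_range_pow hident hint n) (fun j => (hident n).integrable_pow (hint j)) k]
  simp_rw [(hident n).integral_pow]

theorem iIndepFun.integral_sum_range (hindep : iIndepFun Y P)
    (hident : ∀ i, IdentDistrib (Y i) (Y 0) P P) (hint : ∀ j : ℕ, Integrable (fun ω => Y 0 ω ^ j) P)
    (hmean : ∫ ω, Y 0 ω ∂P = 0) (n : ℕ) : ∫ ω, ∑ i ∈ range n, Y i ω ∂P = 0 := by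
  induction n with
  | zero => simp
  | succ n ih =>
    simpa [sum_range_succ, ih, hmean] using hindep.integral_sum_range_succ_pow hident hint n 1

theorem iIndepFun.integral_sum_range_pow_two (hindep : iIndepFun Y P)
    (hident : ∀ i, IdentDistrib (Y i) (Y 0) P P) (hint : ∀ j : ℕ, Integrable (fun ω => Y 0 ω ^ j) P)
    (hmean : ∫ ω, Y 0 ω ∂P = 0) (n : ℕ) :
    ∫ ω, (∑ i ∈ range n, Y i ω) ^ 2 ∂P = n * ∫ ω, Y 0 ω ^ 2 ∂P := by
  induction n with
  | zero => simp
  | succ n ih =>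
    rw [hindep.integral_sum_range_succ_pow hident hint]
    simp only [sum_range_succ, range_one, sum_singleton, Nat.reduceAdd, Nat.reduceSub, tsub_zero,
      tsub_self, pow_zero, pow_one, integral_const, probReal_univ, smul_eq_mul,
      Nat.choose_zero_right, Nat.choose_succ_self_right, Nat.choose_self, Nat.cast_ofNat,
      Nat.cast_one, Nat.cast_add, hmean, ih]
    ring

theorem iIndepFun.integral_sum_range_pow_three (hindep : iIndepFun Y P)
    (hident : ∀ i, IdentDistrib (Y i) (Y 0) P P) (hint : ∀ j : ℕ, Integrable (fun ω => Y 0 ω ^ j) P)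
    (hmean : ∫ ω, Y 0 ω ∂P = 0) (n : ℕ) :
    ∫ ω, (∑ i ∈ range n, Y i ω) ^ 3 ∂P = n * ∫ ω, Y 0 ω ^ 3 ∂P := by
  induction n with
  | zero => simp
  | succ n ih =>
    rw [hindep.integral_sum_range_succ_pow hident hint]
    simp only [sum_range_succ, range_one, sum_singleton, Nat.reduceAdd, Nat.reduceSub, tsub_zero,
      tsub_self, pow_zero, pow_one, integral_const, probReal_univ, smul_eq_mul,
      Nat.choose_zero_right, Nat.choose_one_right, Nat.choose_succ_self_right, Nat.choose_self,
      Nat.cast_ofNat, Nat.cast_one, Nat.cast_add, hmean, ih,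
      hindep.integral_sum_range hident hint hmean]
    ring

theorem iIndepFun.integral_sum_range_pow_four (hindep : iIndepFun Y P)
    (hident : ∀ i, IdentDistrib (Y i) (Y 0) P P) (hint : ∀ j : ℕ, Integrable (fun ω => Y 0 ω ^ j) P)
    (hmean : ∫ ω, Y 0 ω ∂P = 0) (n : ℕ) :
    ∫ ω, (∑ i ∈ range n, Y i ω) ^ 4 ∂P
      = n * ∫ ω, Y 0 ω ^ 4 ∂P + 3 * n * (n - 1) * (∫ ω, Y 0 ω ^ 2 ∂P) ^ 2 := by
  induction n with
  | zero => simp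
  | succ n ih =>
    rw [hindep.integral_sum_range_succ_pow hident hint]
    simp only [sum_range_succ, range_one, sum_singleton, Nat.reduceAdd, Nat.reduceSub, tsub_zero,
      tsub_self, pow_zero, pow_one, integral_const, probReal_univ, smul_eq_mul,
      Nat.choose_zero_right, Nat.choose_one_right, Nat.choose_succ_self_right, Nat.choose_self,
      Nat.cast_ofNat, Nat.cast_one, Nat.cast_add, hmean, ih,
      hindep.integral_sum_range hident hint hmean,
      hindep.integral_sum_range_pow_two hident hint hmean, show Nat.choose 4 2 = 6 from rfl]
    ring

theorem iIndepFun.abs_integral_log_one_add_sum_div_sub_le {Y : ℕ → Ω → ℝ} {a c : ℝ}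
    (hc : 0 < c) (hc1 : c ≤ 1) (hindep : iIndepFun Y P)
    (hident : ∀ i, IdentDistrib (Y i) (Y 0) P P)
    (hint : ∀ j : ℕ, Integrable (fun ω => Y 0 ω ^ j) P) (hmean : ∫ ω, Y 0 ω ∂P = 0) (n : ℕ)
    (hlow : ∀ ω, c ≤ 1 + (∑ i ∈ range n, Y i ω) / a) :
    |∫ ω, log (1 + (∑ i ∈ range n, Y i ω) / a) ∂P
        + n * (∫ ω, Y 0 ω ^ 2 ∂P) / (2 * a ^ 2) - n * (∫ ω, Y 0 ω ^ 3 ∂P) / (3 * a ^ 3)|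
      ≤ (n * ∫ ω, Y 0 ω ^ 4 ∂P + 3 * n * (n - 1) * (∫ ω, Y 0 ω ^ 2 ∂P) ^ 2) / (a ^ 4 * c) := by
  set S : Ω → ℝ := fun ω => ∑ i ∈ range n, Y i ω
  have hS_int : ∀ k : ℕ, Integrable (fun ω => (S ω / a) ^ k) P := fun k => by
    simpa only [div_pow] using (hindep.integrable_sum_range_pow hident hint n k).div_const _
  have hS_moment : ∀ k : ℕ, ∫ ω, (S ω / a) ^ k ∂P = (∫ ω, S ω ^ k ∂P) / a ^ k := fun k => by
    simp only [div_pow, integral_div]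
  have hE := abs_integral_log_one_add_sub_le hc hc1 hlow
    (by simpa using hS_int 1) (hS_int 2) (hS_int 3) (hS_int 4)
  rw [(by simpa using hS_moment 1 : ∫ ω, S ω / a ∂P = (∫ ω, S ω ∂P) / a), hS_moment 2,
    hS_moment 3, hS_moment 4, hindep.integral_sum_range hident hint hmean,
    hindep.integral_sum_range_pow_two hident hint hmean,
    hindep.integral_sum_range_pow_three hident hint hmean,
    hindep.integral_sum_range_pow_four hident hint hmean] at hE
  convert hE.trans_eq (div_div _ _ _) using 2
  ring

theorem iIndepFun.abs_integral_neg_log_add_sum_div_sub_le {Y : ℕ → Ω → ℝ} {μ c : ℝ}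
    (hc : 0 < c) (hcμ : c ≤ μ) (hindep : iIndepFun Y P)
    (hident : ∀ i, IdentDistrib (Y i) (Y 0) P P)
    (hint : ∀ j : ℕ, Integrable (fun ω => Y 0 ω ^ j) P) (hmean : ∫ ω, Y 0 ω ∂P = 0) {n : ℕ}
    (hn : 0 < n) (hlow : ∀ ω, c ≤ μ + (∑ i ∈ range n, Y i ω) / n) :
    |∫ ω, -log (μ + (∑ i ∈ range n, Y i ω) / n) ∂P + log μ
        - (∫ ω, Y 0 ω ^ 2 ∂P) / (2 * μ ^ 2) / n|
      ≤ (|∫ ω, Y 0 ω ^ 3 ∂P| / (3 * μ ^ 3)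
          + (∫ ω, Y 0 ω ^ 4 ∂P + 3 * (∫ ω, Y 0 ω ^ 2 ∂P) ^ 2) / (c * μ ^ 3)) / n ^ 2 := by
  have hμ : 0 < μ := hc.trans_le hcμ
  have hnR : (0 : ℝ) < n := Nat.cast_pos.2 hn
  set S : Ω → ℝ := fun ω => ∑ i ∈ range n, Y i ω
  have hmean_eq : ∀ ω, μ + S ω / n = μ * (1 + S ω / (n * μ)) := fun ω => by field_simp
  have hu : ∀ ω, c / μ ≤ 1 + S ω / (n * μ) := fun ω => by
    rw [div_le_iff₀ hμ, mul_comm, ← hmean_eq]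
    exact hlow ω
  have hlog : ∫ ω, -log (μ + S ω / n) ∂P = -log μ - ∫ ω, log (1 + S ω / (n * μ)) ∂P := by
    have hS_int : ∀ k : ℕ, Integrable (fun ω => (S ω / (n * μ)) ^ k) P := fun k => by
      simpa only [div_pow] using (hindep.integrable_sum_range_pow hident hint n k).div_const _
    have hlog_int := integrable_log_one_add (div_pos hc hμ) ((div_le_one hμ).2 hcμ) hu
      (by simpa using hS_int 1) (hS_int 2) (hS_int 3) (hS_int 4)
    have hpos : ∀ ω, 0 < 1 + S ω / (n * μ) := fun ω => (div_pos hc hμ).trans_le (hu ω)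
    calc _ = ∫ ω, -log μ - log (1 + S ω / (n * μ)) ∂P := integral_congr_ae (ae_of_all _ fun ω => by
          rw [hmean_eq, log_mul hμ.ne' (hpos ω).ne']
          ring)
      _ = _ := by
          rw [integral_sub (integrable_const _) hlog_int]
          simp
  have hE := hindep.abs_integral_log_one_add_sum_div_sub_le (div_pos hc hμ)
    ((div_le_one hμ).2 hcμ) hident hint hmean n hu
  rw [hlog]
  set L := ∫ ω, log (1 + S ω / (n * μ)) ∂P
  set m2 := ∫ ω, Y 0 ω ^ 2 ∂P
  set m3 := ∫ ω, Y 0 ω ^ 3 ∂P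
  set m4 := ∫ ω, Y 0 ω ^ 4 ∂P
  have hnum : n * m4 + 3 * n * (n - 1) * m2 ^ 2 ≤ n ^ 2 * (m4 + 3 * m2 ^ 2) := by
    have hm4 : 0 ≤ m4 := integral_nonneg fun ω => by positivity
    have hn1 : (1 : ℝ) ≤ n := Nat.one_le_cast.2 hn
    nlinarith [mul_nonneg (mul_nonneg hnR.le (sub_nonneg.2 hn1)) hm4, sq_nonneg m2]
  calc _ = |(L + n * m2 / (2 * (n * μ) ^ 2) - n * m3 / (3 * (n * μ) ^ 3))
        + m3 / (3 * μ ^ 3) / n ^ 2| := by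
        rw [← abs_neg]
        congr 1
        field_simp
        ring
    _ ≤ (n * m4 + 3 * n * (n - 1) * m2 ^ 2) / ((n * μ) ^ 4 * (c / μ))
        + |m3| / (3 * μ ^ 3) / n ^ 2 := by
        refine (abs_add_le _ _).trans (add_le_add hE (le_of_eq ?_))
        rw [abs_div, abs_div, abs_of_pos (by positivity : (0 : ℝ) < 3 * μ ^ 3),
          abs_of_pos (by positivity : (0 : ℝ) < n ^ 2)]
    _ = (n * m4 + 3 * n * (n - 1) * m2 ^ 2) / n ^ 4 / (c * μ ^ 3)
        + |m3| / (3 * μ ^ 3) / n ^ 2 := by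
        field_simp
    _ ≤ n ^ 2 * (m4 + 3 * m2 ^ 2) / n ^ 4 / (c * μ ^ 3) + |m3| / (3 * μ ^ 3) / n ^ 2 := by
        gcongr
    _ = _ := by
        field_simp
        ring

theorem iIndepFun.integral_neg_log_mean_isBigO {X : ℕ → Ω → ℝ} {c : ℝ} (hc : 0 < c)
    (hindep : iIndepFun X P) (hident : ∀ i, IdentDistrib (X i) (X 0) P P)
    (hbdd : ∀ i ω, X i ω ∈ Set.Icc c 1) :
    (fun n : ℕ => ∫ ω, -log ((∑ i ∈ range n, X i ω) / n) ∂P + log P[X 0]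
      - Var[X 0; P] / (2 * P[X 0] ^ 2) / n) =O[atTop] fun n => 1 / (n : ℝ) ^ 2 := by
  set μ := P[X 0]
  have hX0 : Integrable (X 0) P :=
    .of_bound (hident 0).aemeasurable_fst.aestronglyMeasurable 1 (ae_of_all _ fun ω =>
      abs_le.2 ⟨by linarith [(hbdd 0 ω).1], (hbdd 0 ω).2⟩)
  have hcμ : c ≤ μ := by
    simpa using integral_mono (integrable_const c) hX0 fun ω => (hbdd 0 ω).1
  have hμ1 : μ ≤ 1 := by
    simpa using integral_mono hX0 (integrable_const 1) fun ω => (hbdd 0 ω).2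
  set Y : ℕ → Ω → ℝ := fun i ω => X i ω - μ
  have hYindep : iIndepFun Y P := hindep.comp (fun _ x => x - μ) fun _ => measurable_sub_const μ
  have hYident : ∀ i, IdentDistrib (Y i) (Y 0) P P :=
    fun i => (hident i).comp (measurable_sub_const μ)
  have hY_abs : ∀ ω, |Y 0 ω| ≤ 1 := fun ω =>
    abs_le.2 ⟨by linarith [(hbdd 0 ω).1], by linarith [(hbdd 0 ω).2]⟩
  have hYint : ∀ j : ℕ, Integrable (fun ω => Y 0 ω ^ j) P := fun j =>
    .of_bound ((hYident 0).aemeasurable_fst.pow_const j).aestronglyMeasurable 1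
      (ae_of_all _ fun ω => by simpa using pow_le_one₀ (abs_nonneg _) (hY_abs ω))
  have hYmean : ∫ ω, Y 0 ω ∂P = 0 := by simp [Y, integral_sub hX0 (integrable_const μ), μ]
  have hmean_eq : ∀ n : ℕ, 0 < n → ∀ ω,
      (∑ i ∈ range n, X i ω) / n = μ + (∑ i ∈ range n, Y i ω) / n := fun n hn ω => by
    simp only [Y, sum_sub_distrib, sum_const, card_range, nsmul_eq_mul]
    field_simp
    ring
  rw [variance_eq_integral (hident 0).aemeasurable_fst]
  refine .of_bound (|∫ ω, Y 0 ω ^ 3 ∂P| / (3 * μ ^ 3)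
    + (∫ ω, Y 0 ω ^ 4 ∂P + 3 * (∫ ω, Y 0 ω ^ 2 ∂P) ^ 2) / (c * μ ^ 3))
    (eventually_atTop.2 ⟨1, fun n hn => ?_⟩)
  have hlow : ∀ ω, c ≤ μ + (∑ i ∈ range n, Y i ω) / n := fun ω => by
    rw [← hmean_eq n hn, le_div_iff₀ (Nat.cast_pos.2 hn), mul_comm]
    simpa using card_nsmul_le_sum (range n) (X · ω) c fun i _ => (hbdd i ω).1
  have hbound :=
    hYindep.abs_integral_neg_log_add_sum_div_sub_le hc hcμ hYident hYint hYmean hn hlow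
  simp_rw [← hmean_eq n hn] at hbound
  rw [Real.norm_eq_abs, Real.norm_of_nonneg (by positivity), ← div_eq_mul_one_div]
  exact hbound

end ProbabilityTheory

/-- Tempering before averaging: for i.i.d. probability vectors `p i` with entries in `[ε, 1]`
(`0 < ε ≤ 1/K`) summing to one, the tempered correct-class probabilities
`p*_i(τ) = (p_{i,0})^{1/τ} / ∑_k (p_{i,k})^{1/τ}` lie in `[ε^{1/τ}/K, 1]`, hence are
separated from zero, and the tempered ensemble NLL satisfies
`E[-log((1/n) ∑ᵢ p*_i(τ))] = -log μ(τ) + (σ(τ)²/(2 μ(τ)²))·(1/n) + O(1/n²)` as `n → ∞`,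
with nonnegative coefficient `σ(τ)²/(2 μ(τ)²)` of `1/n`. -/
theorem tempered_nll_power_law
    {Ω : Type*} [MeasurableSpace Ω] (P : Measure Ω) [IsProbabilityMeasure P]
    (K : ℕ) (hK : 2 ≤ K) (ε : ℝ) (hε : 0 < ε)
    (p : ℕ → Ω → Fin K → ℝ)
    (hrange : ∀ i ω, (∀ k, p i ω k ∈ Set.Icc ε 1) ∧ ∑ k, p i ω k = 1)
    (hindep : iIndepFun p P)
    (hident : ∀ i, IdentDistrib (p i) (p 0) P P)
    (τ : ℝ) (hτ : 0 < τ)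
    (pstar : ℕ → Ω → ℝ)
    (hpstar : ∀ i ω, pstar i ω = p i ω ⟨0, by omega⟩ ^ (1 / τ) / ∑ k, p i ω k ^ (1 / τ))
    (μτ στ2 : ℝ) (hμτ : μτ = ∫ ω, pstar 0 ω ∂P) (hστ2 : στ2 = variance (pstar 0) P) :
    (∀ i ω, pstar i ω ∈ Set.Icc (ε ^ (1 / τ) / K) 1) ∧
    0 ≤ στ2 / (2 * μτ ^ 2) ∧
    (∃ C > (0 : ℝ), ∃ N : ℕ, 0 < N ∧ ∀ n : ℕ, N ≤ n →
      |(∫ ω, -Real.log ((∑ i ∈ Finset.range n, pstar i ω) / n) ∂P)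
          + Real.log μτ - στ2 / (2 * μτ ^ 2) / n| ≤ C / (n : ℝ) ^ 2) := by
  have hpstar_eq : ∀ i, pstar i = temperedProb (1 / τ) ⟨0, by omega⟩ ∘ p i :=
    fun i => funext (hpstar i)
  have hbdd : ∀ i ω, pstar i ω ∈ Set.Icc (ε ^ (1 / τ) / K) 1 := fun i ω => by
    simpa [hpstar_eq] using temperedProb_mem_Icc hε (by positivity) (hrange i ω).1 ⟨0, by omega⟩
  have hpstar_indep : iIndepFun pstar P := by
    simpa only [← hpstar_eq] using
      hindep.comp _ fun _ => measurable_temperedProb (1 / τ) (⟨0, by omega⟩ : Fin K)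
  have hpstar_ident : ∀ i, IdentDistrib (pstar i) (pstar 0) P P := fun i => by
    simpa only [hpstar_eq] using (hident i).comp (measurable_temperedProb _ _)
  obtain ⟨C, hC, hO⟩ :=
    (hpstar_indep.integral_neg_log_mean_isBigO (by positivity) hpstar_ident hbdd).exists_pos
  obtain ⟨N, hN⟩ := eventually_atTop.1 hO.bound
  refine ⟨hbdd, div_nonneg (hστ2 ▸ variance_nonneg _ _) (by positivity), C, hC, N + 1,
    N.succ_pos, fun n hn => ?_⟩
  subst hμτ hστ2
  simpa [div_eq_mul_one_div C] using hN n (by omega)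
end
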